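/- Let L be an e-cyclic residuated lattice satisfying the left prelinearity law. If every principal polar x^⊥ (x ∈ L) is a normal convex subalgebra of L, then every minimal prime convex subalgebra of L is normal. -/

import Mathlib

/-!
If `a` lies in a minimal prime `P`, then `|a| ⊔ |z| = e` for some `z ∉ P`: otherwise the elements
`|a| ⊔ |z|` with `z ∉ P` form a `⊔`-closed set of negative elements avoiding `e`, and by Zorn a
convex subalgebra maximal among those avoiding this set is a prime contained in `P` but missing
`a`. Primeness of `P`, applied to `z^⊥` and the convex subalgebra generated by `|z|` (which meet
only in `e`), gives `z^⊥ ⊆ P`, so the conjugates of `a`, which lie in the normal subalgebra `z^⊥`,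
lie in `P`.
-/

universe u

/-- A residuated lattice: a lattice-ordered monoid with left and right residuals.
`ldiv x z` is `x \ z` and `rdiv z y` is `z / y`. -/
class ResiduatedLattice (α : Type u) extends Lattice α, Monoid α where
  ldiv : α → α → α
  rdiv : α → α → α
  mul_le_iff_le_ldiv : ∀ x y z : α, x * y ≤ z ↔ y ≤ ldiv x z
  mul_le_iff_le_rdiv : ∀ x y z : α, x * y ≤ z ↔ x ≤ rdiv z y

namespace ResiduatedLattice

variable {α : Type u} [ResiduatedLattice α]

/-- `L` is e-cyclic if `x \ e = e / x` for all `x`. -/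
def ECyclic (α : Type u) [ResiduatedLattice α] : Prop :=
  ∀ x : α, ldiv x 1 = rdiv 1 x

/-- Absolute value: `|x| = x ⊓ (e / x) ⊓ e`. -/
def absv (x : α) : α := x ⊓ rdiv 1 x ⊓ 1

/-- A convex subalgebra: contains `e`, closed under all the operations, and order-convex. -/
structure IsConvexSubalgebra (H : Set α) : Prop where
  one_mem : (1 : α) ∈ H
  mul_mem : ∀ ⦃x⦄, x ∈ H → ∀ ⦃y⦄, y ∈ H → x * y ∈ H
  sup_mem : ∀ ⦃x⦄, x ∈ H → ∀ ⦃y⦄, y ∈ H → x ⊔ y ∈ H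
  inf_mem : ∀ ⦃x⦄, x ∈ H → ∀ ⦃y⦄, y ∈ H → x ⊓ y ∈ H
  ldiv_mem : ∀ ⦃x⦄, x ∈ H → ∀ ⦃y⦄, y ∈ H → ldiv x y ∈ H
  rdiv_mem : ∀ ⦃x⦄, x ∈ H → ∀ ⦃y⦄, y ∈ H → rdiv x y ∈ H
  convex : ∀ ⦃a⦄, a ∈ H → ∀ ⦃b⦄, b ∈ H → ∀ ⦃x⦄, a ≤ x → x ≤ b → x ∈ H

/-- `C[S]`: the smallest convex subalgebra containing `S`. -/
def convexClosure (S : Set α) : Set α :=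
  ⋂₀ {H : Set α | IsConvexSubalgebra H ∧ S ⊆ H}

end ResiduatedLattice

open ResiduatedLattice

/-- A prime convex subalgebra: a convex subalgebra that is meet-irreducible in the
lattice of convex subalgebras. -/
def IsPrimeConvex {α : Type u} [ResiduatedLattice α] (H : Set α) : Prop :=
  IsConvexSubalgebra H ∧
  ∀ X Y : Set α, IsConvexSubalgebra X → IsConvexSubalgebra Y →
    X ∩ Y ⊆ H → X ⊆ H ∨ Y ⊆ H

/-- A minimal prime convex subalgebra. -/
def IsMinimalPrimeConvex {α : Type u} [ResiduatedLattice α] (P : Set α) : Prop :=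
  IsPrimeConvex P ∧ P ≠ Set.univ ∧
  ∀ Q : Set α, IsPrimeConvex Q → Q ≠ Set.univ → Q ⊆ P → Q = P

/-- The polar `S^⊥ = {a : |a| ⊔ |s| = e for all s ∈ S}`. -/
def polar {α : Type u} [ResiduatedLattice α] (S : Set α) : Set α :=
  {a : α | ∀ s ∈ S, absv a ⊔ absv s = 1}

/-- A convex subalgebra is normal if it is closed under conjugation. -/
def IsNormal {α : Type u} [ResiduatedLattice α] (H : Set α) : Prop :=
  ∀ x ∈ H, ∀ y : α, ldiv y (x * y) ⊓ 1 ∈ H ∧ rdiv (y * x) y ⊓ 1 ∈ H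

namespace ResiduatedLattice

variable {α : Type u} [ResiduatedLattice α]

instance : MulLeftMono α :=
  ⟨fun a b c h =>
    (mul_le_iff_le_ldiv a b (a * c)).2 (h.trans ((mul_le_iff_le_ldiv a c _).1 le_rfl))⟩

instance : MulRightMono α :=
  ⟨fun a b c h =>
    (mul_le_iff_le_rdiv b a (c * a)).2 (h.trans ((mul_le_iff_le_rdiv c a _).1 le_rfl))⟩

theorem mul_sup_le (a b c : α) : a * (b ⊔ c) ≤ a * b ⊔ a * c :=
  (mul_le_iff_le_ldiv _ _ _).2 (sup_le ((mul_le_iff_le_ldiv _ _ _).1 le_sup_left)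
    ((mul_le_iff_le_ldiv _ _ _).1 le_sup_right))

theorem sup_mul_le (a b c : α) : (b ⊔ c) * a ≤ b * a ⊔ c * a :=
  (mul_le_iff_le_rdiv _ _ _).2 (sup_le ((mul_le_iff_le_rdiv _ _ _).1 le_sup_left)
    ((mul_le_iff_le_rdiv _ _ _).1 le_sup_right))

theorem mul_le_one_comm (hec : ECyclic α) {a b : α} : a * b ≤ 1 ↔ b * a ≤ 1 := by
  rw [mul_le_iff_le_ldiv, hec, ← mul_le_iff_le_rdiv]

/-- For negative `u, v`, every word of length `n + m` in `u, v` contains `n` letters `u` or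
`m` letters `v`. -/
theorem sup_pow_add_le {u v : α} (hu : u ≤ 1) (hv : v ≤ 1) :
    ∀ n m : ℕ, (u ⊔ v) ^ (n + m) ≤ u ^ n ⊔ v ^ m
  | 0, m => by
    rw [zero_add, pow_zero]
    exact le_sup_of_le_left (pow_le_one' (sup_le hu hv) m)
  | n + 1, 0 => by
    rw [add_zero, pow_zero]
    exact le_sup_of_le_right (pow_le_one' (sup_le hu hv) _)
  | n + 1, m + 1 => by
    have hleft := sup_pow_add_le hu hv n (m + 1)
    have hright := sup_pow_add_le hu hv (n + 1) m
    rw [show n + 1 + m = n + (m + 1) by omega] at hright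
    calc (u ⊔ v) ^ (n + 1 + (m + 1)) = (u ⊔ v) * (u ⊔ v) ^ (n + (m + 1)) := by
          rw [← pow_succ']; congr 1; omega
      _ ≤ u * (u ⊔ v) ^ (n + (m + 1)) ⊔ v * (u ⊔ v) ^ (n + (m + 1)) := sup_mul_le _ _ _
      _ ≤ u * (u ^ n ⊔ v ^ (m + 1)) ⊔ v * (u ^ (n + 1) ⊔ v ^ m) :=
          sup_le_sup (mul_le_mul_right hleft u) (mul_le_mul_right hright v)
      _ ≤ (u ^ (n + 1) ⊔ u * v ^ (m + 1)) ⊔ (v * u ^ (n + 1) ⊔ v ^ (m + 1)) := by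
          rw [pow_succ' u n, pow_succ' v m]
          exact sup_le_sup (mul_sup_le _ _ _) (mul_sup_le _ _ _)
      _ ≤ u ^ (n + 1) ⊔ v ^ (m + 1) :=
          sup_le (sup_le_sup_left (mul_le_of_le_one_left' hu) _)
            (sup_le_sup_right (mul_le_of_le_one_left' hv) _)
termination_by n m => n + m

theorem le_absv_iff {s w : α} (hs : s ≤ 1) : s ≤ absv w ↔ s ≤ w ∧ s * w ≤ 1 := by
  rw [absv, le_inf_iff, le_inf_iff, ← mul_le_iff_le_rdiv]
  exact ⟨fun ⟨h, _⟩ => h, fun h => ⟨h, hs⟩⟩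

theorem absv_le_one (w : α) : absv w ≤ 1 := inf_le_right

theorem absv_le_self (w : α) : absv w ≤ w := inf_le_left.trans inf_le_left

theorem absv_mul_self_le_one (w : α) : absv w * w ≤ 1 :=
  ((le_absv_iff (absv_le_one w)).1 le_rfl).2

theorem absv_of_le_one {u : α} (hu : u ≤ 1) : absv u = u :=
  le_antisymm (absv_le_self u) ((le_absv_iff hu).2 ⟨le_rfl, mul_le_one' hu hu⟩)

theorem eq_one_of_one_le_absv {w : α} (h : 1 ≤ absv w) : w = 1 := by
  obtain ⟨h1, h2⟩ := (le_absv_iff le_rfl).1 h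
  exact le_antisymm ((one_mul w).ge.trans h2) h1

/-! For `s ≤ 1`, the elements `w` with `s ≤ |w|` are closed under the operations, up to replacing
`s` by `s * s`. -/

section Bounds

variable {s a b : α}

theorem mul_le_absv_mul (hs : s ≤ 1) (ha : s ≤ absv a) (hb : s ≤ absv b) :
    s * s ≤ absv (a * b) := by
  rw [le_absv_iff hs] at ha hb
  refine (le_absv_iff (mul_le_one' hs hs)).2 ⟨mul_le_mul' ha.1 hb.1, ?_⟩
  calc s * s * (a * b) = s * (s * a * b) := by simp only [mul_assoc]
    _ ≤ s * b := mul_le_mul_right (mul_le_of_le_one_left' ha.2) s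
    _ ≤ 1 := hb.2

theorem le_absv_sup (hs : s ≤ 1) (ha : s ≤ absv a) (hb : s ≤ absv b) : s ≤ absv (a ⊔ b) := by
  rw [le_absv_iff hs] at ha hb ⊢
  exact ⟨le_sup_of_le_left ha.1, (mul_sup_le s a b).trans (sup_le ha.2 hb.2)⟩

theorem le_absv_inf (hs : s ≤ 1) (ha : s ≤ absv a) (hb : s ≤ absv b) : s ≤ absv (a ⊓ b) := by
  rw [le_absv_iff hs] at ha hb ⊢
  exact ⟨le_inf ha.1 hb.1, (mul_le_mul_right inf_le_left s).trans ha.2⟩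

theorem le_absv_of_le_of_le {x : α} (hs : s ≤ 1) (ha : s ≤ absv a) (hb : s ≤ absv b)
    (hax : a ≤ x) (hxb : x ≤ b) : s ≤ absv x := by
  rw [le_absv_iff hs] at ha hb ⊢
  exact ⟨ha.1.trans hax, (mul_le_mul_right hxb s).trans hb.2⟩

theorem mul_le_absv_ldiv (hec : ECyclic α) (hs : s ≤ 1) (ha : s ≤ absv a) (hb : s ≤ absv b) :
    s * s ≤ absv (ldiv a b) := by
  rw [le_absv_iff hs] at ha hb
  refine (le_absv_iff (mul_le_one' hs hs)).2 ⟨(mul_le_iff_le_ldiv _ _ _).1 ?_, ?_⟩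
  · calc a * (s * s) = a * s * s := (mul_assoc _ _ _).symm
      _ ≤ s := mul_le_of_le_one_left' ((mul_le_one_comm hec).1 ha.2)
      _ ≤ b := hb.1
  · have hds : ldiv a b * s ≤ ldiv a 1 := by
      refine (mul_le_iff_le_ldiv _ _ _).1 ?_
      calc a * (ldiv a b * s) = a * ldiv a b * s := (mul_assoc _ _ _).symm
        _ ≤ b * s := mul_le_mul_left ((mul_le_iff_le_ldiv _ _ _).2 le_rfl) s
        _ ≤ 1 := (mul_le_one_comm hec).1 hb.2
    refine (mul_le_one_comm hec).2 ?_
    calc ldiv a b * (s * s) = ldiv a b * s * s := (mul_assoc _ _ _).symm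
      _ ≤ rdiv 1 a * a := mul_le_mul' (hds.trans_eq (hec a)) ha.1
      _ ≤ 1 := (mul_le_iff_le_rdiv _ _ _).2 le_rfl

theorem mul_le_absv_rdiv (hec : ECyclic α) (hs : s ≤ 1) (ha : s ≤ absv a) (hb : s ≤ absv b) :
    s * s ≤ absv (rdiv a b) := by
  rw [le_absv_iff hs] at ha hb
  refine (le_absv_iff (mul_le_one' hs hs)).2 ⟨(mul_le_iff_le_rdiv _ _ _).1 ?_, ?_⟩
  · calc s * s * b = s * (s * b) := mul_assoc _ _ _
      _ ≤ s := mul_le_of_le_one_right' hb.2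
      _ ≤ a := ha.1
  · refine (mul_le_one_comm hec).2 ?_
    calc rdiv a b * (s * s) ≤ rdiv a b * b * s := by
          rw [mul_assoc]; exact mul_le_mul_right (mul_le_mul_left hb.1 s) _
      _ ≤ a * s := mul_le_mul_left ((mul_le_iff_le_rdiv _ _ _).2 le_rfl) s
      _ ≤ 1 := (mul_le_one_comm hec).1 ha.2

end Bounds

namespace IsConvexSubalgebra

variable {H : Set α}

theorem absv_mem (hH : IsConvexSubalgebra H) {w : α} (hw : w ∈ H) : absv w ∈ H :=
  hH.inf_mem (hH.inf_mem hw (hH.rdiv_mem hH.one_mem hw)) hH.one_mem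

theorem mem_of_absv_mem (hH : IsConvexSubalgebra H) (hec : ECyclic α) {w : α}
    (hw : absv w ∈ H) : w ∈ H :=
  hH.convex hw (hH.rdiv_mem hH.one_mem hw) (absv_le_self w)
    ((mul_le_iff_le_rdiv _ _ _).1 ((mul_le_one_comm hec).1 (absv_mul_self_le_one w)))

theorem pow_mem (hH : IsConvexSubalgebra H) {x : α} (hx : x ∈ H) : ∀ n : ℕ, x ^ n ∈ H
  | 0 => by rw [pow_zero]; exact hH.one_mem
  | n + 1 => by rw [pow_succ]; exact hH.mul_mem (pow_mem hH hx n) hx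

theorem iUnion {ι : Type*} [Nonempty ι] {H : ι → Set α} (hdir : Directed (· ⊆ ·) H)
    (hH : ∀ i, IsConvexSubalgebra (H i)) : IsConvexSubalgebra (⋃ i, H i) := by
  have common : ∀ {x y : α}, x ∈ ⋃ i, H i → y ∈ ⋃ i, H i → ∃ k, x ∈ H k ∧ y ∈ H k := by
    intro x y hx hy
    obtain ⟨i, hi⟩ := Set.mem_iUnion.1 hx
    obtain ⟨j, hj⟩ := Set.mem_iUnion.1 hy
    obtain ⟨k, hik, hjk⟩ := hdir i j
    exact ⟨k, hik hi, hjk hj⟩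
  constructor
  · exact Set.mem_iUnion.2 ⟨Classical.arbitrary ι, (hH _).one_mem⟩
  all_goals
    intro x hx y hy
    obtain ⟨k, hxk, hyk⟩ := common hx hy
  · exact Set.mem_iUnion.2 ⟨k, (hH k).mul_mem hxk hyk⟩
  · exact Set.mem_iUnion.2 ⟨k, (hH k).sup_mem hxk hyk⟩
  · exact Set.mem_iUnion.2 ⟨k, (hH k).inf_mem hxk hyk⟩
  · exact Set.mem_iUnion.2 ⟨k, (hH k).ldiv_mem hxk hyk⟩
  · exact Set.mem_iUnion.2 ⟨k, (hH k).rdiv_mem hxk hyk⟩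
  · intro z hxz hzy
    exact Set.mem_iUnion.2 ⟨k, (hH k).convex hxk hyk hxz hzy⟩

end IsConvexSubalgebra

/-- For `t ≤ 1` (and `L` e-cyclic) this is the convex subalgebra generated by `t`. -/
def principalConvex (t : α) : Set α := {w | ∃ n : ℕ, t ^ n ≤ absv w}

theorem principalConvex_anti {s t : α} (h : s ≤ t) : principalConvex t ⊆ principalConvex s :=
  fun _ ⟨n, hn⟩ => ⟨n, (pow_le_pow_left' h n).trans hn⟩

theorem mem_principalConvex_absv (w : α) : w ∈ principalConvex (absv w) := ⟨1, (pow_one _).le⟩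

theorem principalConvex_subset {t : α} {H : Set α} (hH : IsConvexSubalgebra H)
    (hec : ECyclic α) (ht : t ∈ H) : principalConvex t ⊆ H := fun _ ⟨n, hn⟩ =>
  hH.mem_of_absv_mem hec (hH.convex (hH.pow_mem ht n) hH.one_mem hn (absv_le_one _))

theorem exists_pow_le_absv_of_mem_principalConvex {t a b : α} (ht : t ≤ 1)
    (ha : a ∈ principalConvex t) (hb : b ∈ principalConvex t) :
    ∃ n, t ^ n ≤ absv a ∧ t ^ n ≤ absv b := by
  obtain ⟨n, hn⟩ := ha
  obtain ⟨m, hm⟩ := hb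
  exact ⟨n + m, (pow_le_pow_right_of_le_one' ht (Nat.le_add_right n m)).trans hn,
    (pow_le_pow_right_of_le_one' ht (Nat.le_add_left m n)).trans hm⟩

theorem isConvexSubalgebra_principalConvex (hec : ECyclic α) {t : α} (ht : t ≤ 1) :
    IsConvexSubalgebra (principalConvex t) := by
  constructor
  · exact ⟨0, by rw [pow_zero, absv_of_le_one le_rfl]⟩
  all_goals
    intro a ha b hb
    obtain ⟨n, han, hbn⟩ := exists_pow_le_absv_of_mem_principalConvex ht ha hb
    have htn := pow_le_one' ht n
  · exact ⟨n + n, pow_add t n n ▸ mul_le_absv_mul htn han hbn⟩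
  · exact ⟨n, le_absv_sup htn han hbn⟩
  · exact ⟨n, le_absv_inf htn han hbn⟩
  · exact ⟨n + n, pow_add t n n ▸ mul_le_absv_ldiv hec htn han hbn⟩
  · exact ⟨n + n, pow_add t n n ▸ mul_le_absv_rdiv hec htn han hbn⟩
  · exact fun x hax hxb => ⟨n, le_absv_of_le_of_le htn han hbn hax hxb⟩

/-- For a convex subalgebra `Q` and `u ≤ 1` this is the convex subalgebra generated by
`Q ∪ {u}`. -/
def convexAdjoin (Q : Set α) (u : α) : Set α :=
  ⋃ g : {g : α // g ∈ Q ∧ g ≤ 1}, principalConvex (g.1 * u)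

theorem isConvexSubalgebra_convexAdjoin (hec : ECyclic α) {Q : Set α}
    (hQ : IsConvexSubalgebra Q) {u : α} (hu : u ≤ 1) : IsConvexSubalgebra (convexAdjoin Q u) := by
  have : Nonempty {g : α // g ∈ Q ∧ g ≤ 1} := ⟨⟨1, hQ.one_mem, le_rfl⟩⟩
  refine IsConvexSubalgebra.iUnion (fun g₁ g₂ => ?_)
    fun g => isConvexSubalgebra_principalConvex hec (mul_le_one' g.2.2 hu)
  refine ⟨⟨g₁.1 ⊓ g₂.1, hQ.inf_mem g₁.2.1 g₂.2.1, inf_le_left.trans g₁.2.2⟩, ?_, ?_⟩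
  · exact principalConvex_anti (mul_le_mul_left inf_le_left u)
  · exact principalConvex_anti (mul_le_mul_left inf_le_right u)

theorem subset_convexAdjoin {Q : Set α} (hQ : IsConvexSubalgebra Q) {u : α} (hu : u ≤ 1) :
    Q ⊆ convexAdjoin Q u := fun q hq =>
  Set.mem_iUnion.2 ⟨⟨absv q, hQ.absv_mem hq, absv_le_one q⟩, 1,
    (pow_one _).trans_le (mul_le_of_le_one_right' hu)⟩

theorem mem_convexAdjoin_self {Q : Set α} (hQ : IsConvexSubalgebra Q) {u : α} (hu : u ≤ 1) :
    u ∈ convexAdjoin Q u :=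
  Set.mem_iUnion.2 ⟨⟨1, hQ.one_mem, le_rfl⟩, 1, by rw [pow_one, one_mul, absv_of_le_one hu]⟩

theorem absv_sup_absv_mem_principalConvex_sup {u v w w' : α} (hu : u ≤ 1) (hv : v ≤ 1)
    (hw : w ∈ principalConvex u) (hw' : w' ∈ principalConvex v) :
    absv w ⊔ absv w' ∈ principalConvex (u ⊔ v) := by
  obtain ⟨n, hn⟩ := hw
  obtain ⟨m, hm⟩ := hw'
  refine ⟨n + m, (sup_pow_add_le hu hv n m).trans ?_⟩
  rw [absv_of_le_one (sup_le (absv_le_one w) (absv_le_one w'))]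
  exact sup_le_sup hn hm

theorem exists_maximal_isConvexSubalgebra_disjoint (hec : ECyclic α) {M : Set α}
    (hM : (1 : α) ∉ M) : ∃ Q, Maximal (fun H => IsConvexSubalgebra H ∧ Disjoint H M) Q := by
  have hchain : ∀ c ⊆ {H | IsConvexSubalgebra H ∧ Disjoint H M}, IsChain (· ⊆ ·) c →
      c.Nonempty → ∃ ub ∈ {H | IsConvexSubalgebra H ∧ Disjoint H M}, ∀ H ∈ c, H ⊆ ub := by
    intro c hcS hc hne
    have : Nonempty c := hne.to_subtype
    refine ⟨⋃₀ c, ⟨?_, Set.disjoint_sUnion_left.2 fun H hH => (hcS hH).2⟩,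
      fun H hH => Set.subset_sUnion_of_mem hH⟩
    rw [Set.sUnion_eq_iUnion]
    exact IsConvexSubalgebra.iUnion (directedOn_iff_directed.1 hc.directedOn) fun H => (hcS H.2).1
  have hbase : Disjoint (principalConvex (1 : α)) M := by
    refine Set.disjoint_left.2 fun w ⟨n, hn⟩ hwM => hM ?_
    rw [one_pow] at hn
    rwa [← eq_one_of_one_le_absv hn]
  obtain ⟨Q, -, hQ⟩ := zorn_subset_nonempty _ hchain _
    ⟨isConvexSubalgebra_principalConvex hec le_rfl, hbase⟩
  exact ⟨Q, hQ⟩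

end ResiduatedLattice

open ResiduatedLattice

theorem isPrimeConvex_of_absv_sup_mem {α : Type u} [ResiduatedLattice α] {H : Set α}
    (hH : IsConvexSubalgebra H) (h : ∀ r s : α, absv r ⊔ absv s ∈ H → r ∈ H ∨ s ∈ H) :
    IsPrimeConvex H := by
  refine ⟨hH, fun X Y hX hY hXY => or_iff_not_imp_left.2 fun hXH s hs => ?_⟩
  obtain ⟨r, hrX, hrH⟩ := Set.not_subset.1 hXH
  have hbound : absv r ⊔ absv s ≤ 1 := sup_le (absv_le_one r) (absv_le_one s)
  have hX' := hX.convex (hX.absv_mem hrX) hX.one_mem le_sup_left hbound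
  have hY' := hY.convex (hY.absv_mem hs) hY.one_mem le_sup_right hbound
  exact (h r s (hXY ⟨hX', hY'⟩)).resolve_left hrH

theorem IsPrimeConvex.absv_sup_absv_notMem {α : Type u} [ResiduatedLattice α] (hec : ECyclic α)
    {P : Set α} (hP : IsPrimeConvex P) {x y : α} (hx : x ∉ P) (hy : y ∉ P) :
    absv x ⊔ absv y ∉ P := by
  intro hxy
  have hmeet : principalConvex (absv x) ∩ principalConvex (absv y) ⊆ P := by
    rintro w ⟨⟨n, hn⟩, ⟨m, hm⟩⟩
    refine principalConvex_subset hP.1 hec hxy ⟨n + m, ?_⟩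
    exact (sup_pow_add_le (absv_le_one x) (absv_le_one y) n m).trans (sup_le hn hm)
  rcases hP.2 _ _ (isConvexSubalgebra_principalConvex hec (absv_le_one x))
      (isConvexSubalgebra_principalConvex hec (absv_le_one y)) hmeet with h | h
  · exact hx (h (mem_principalConvex_absv x))
  · exact hy (h (mem_principalConvex_absv y))

theorem IsPrimeConvex.polar_subset_of_notMem {α : Type u} [ResiduatedLattice α] (hec : ECyclic α)
    {P : Set α} (hP : IsPrimeConvex P) {z : α} (hz : IsConvexSubalgebra (polar {z}))
    (hzP : z ∉ P) : polar {z} ⊆ P := by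
  have hmeet : polar {z} ∩ principalConvex (absv z) ⊆ P := by
    rintro w ⟨hw, n, hn⟩
    have hwz : absv w ⊔ absv z = 1 := hw z rfl
    have hone : (1 : α) ≤ absv w := by
      calc (1 : α) = (absv w ⊔ absv z) ^ (1 + n) := by rw [hwz, one_pow]
        _ ≤ absv w ^ 1 ⊔ absv z ^ n := sup_pow_add_le (absv_le_one w) (absv_le_one z) 1 n
        _ ≤ absv w := by rw [pow_one]; exact sup_le le_rfl hn
    rw [eq_one_of_one_le_absv hone]
    exact hP.1.one_mem
  exact (hP.2 _ _ hz (isConvexSubalgebra_principalConvex hec (absv_le_one z)) hmeet).resolve_right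
    fun h => hzP (h (mem_principalConvex_absv z))

theorem isPrimeConvex_of_maximal_disjoint {α : Type u} [ResiduatedLattice α] (hec : ECyclic α)
    {M Q : Set α} (hM1 : ∀ m ∈ M, m ≤ 1) (hMsup : ∀ m ∈ M, ∀ m' ∈ M, m ⊔ m' ∈ M)
    (hQ : Maximal (fun H => IsConvexSubalgebra H ∧ Disjoint H M) Q) : IsPrimeConvex Q := by
  obtain ⟨⟨hQc, hQM⟩, hQmax⟩ := hQ
  have hmeets : ∀ w ∉ Q, ∃ g ∈ Q, g ≤ 1 ∧ ∃ m ∈ M, m ∈ principalConvex (g * absv w) := by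
    intro w hw
    have hw1 := absv_le_one w
    have hnd : ¬Disjoint (convexAdjoin Q (absv w)) M := fun hdisj =>
      hw (hQc.mem_of_absv_mem hec (hQmax ⟨isConvexSubalgebra_convexAdjoin hec hQc hw1, hdisj⟩
        (subset_convexAdjoin hQc hw1) (mem_convexAdjoin_self hQc hw1)))
    obtain ⟨m, hmK, hmM⟩ := Set.not_disjoint_iff.1 hnd
    obtain ⟨⟨g, hgQ, hg1⟩, hm⟩ := Set.mem_iUnion.1 hmK
    exact ⟨g, hgQ, hg1, m, hmM, hm⟩
  refine isPrimeConvex_of_absv_sup_mem hQc fun r s hrs => ?_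
  by_contra! hrsQ
  obtain ⟨g₁, hg₁Q, hg₁, m₁, hm₁M, hm₁⟩ := hmeets r hrsQ.1
  obtain ⟨g₂, hg₂Q, hg₂, m₂, hm₂M, hm₂⟩ := hmeets s hrsQ.2
  have hg : g₁ ⊓ g₂ ≤ 1 := inf_le_left.trans hg₁
  have hm : absv m₁ ⊔ absv m₂ ∈ principalConvex ((g₁ ⊓ g₂) * absv r ⊔ (g₁ ⊓ g₂) * absv s) :=
    absv_sup_absv_mem_principalConvex_sup (mul_le_one' hg (absv_le_one r))
      (mul_le_one' hg (absv_le_one s))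
      (principalConvex_anti (mul_le_mul_left inf_le_left _) hm₁)
      (principalConvex_anti (mul_le_mul_left inf_le_right _) hm₂)
  have hm₁₂ : m₁ ⊔ m₂ ∈ Q := by
    rw [← absv_of_le_one (hM1 m₁ hm₁M), ← absv_of_le_one (hM1 m₂ hm₂M)]
    exact principalConvex_subset hQc hec (hQc.mul_mem (hQc.inf_mem hg₁Q hg₂Q) hrs)
      (principalConvex_anti (mul_sup_le _ _ _) hm)
  exact Set.disjoint_left.1 hQM hm₁₂ (hMsup _ hm₁M _ hm₂M)

theorem IsMinimalPrimeConvex.exists_notMem_absv_sup_eq_one {α : Type u} [ResiduatedLattice α]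
    (hec : ECyclic α) {P : Set α} (hP : IsMinimalPrimeConvex P) {a : α} (ha : a ∈ P) :
    ∃ z ∉ P, absv a ⊔ absv z = 1 := by
  obtain ⟨hPp, hPu, hPmin⟩ := hP
  by_contra! hne
  set M := (fun x => absv a ⊔ absv x) '' Pᶜ
  have hM1 : ∀ m ∈ M, m ≤ 1 := by
    rintro _ ⟨x, -, rfl⟩
    exact sup_le (absv_le_one a) (absv_le_one x)
  have hMsup : ∀ m ∈ M, ∀ m' ∈ M, m ⊔ m' ∈ M := by
    rintro _ ⟨x, hx, rfl⟩ _ ⟨y, hy, rfl⟩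
    refine ⟨absv x ⊔ absv y, hPp.absv_sup_absv_notMem hec hx hy, ?_⟩
    dsimp only
    rw [absv_of_le_one (sup_le (absv_le_one x) (absv_le_one y)), sup_sup_distrib_left]
  obtain ⟨Q, hQ⟩ := exists_maximal_isConvexSubalgebra_disjoint hec (M := M)
    fun ⟨x, hx, h⟩ => hne x hx h
  have hQc := hQ.1.1
  have hlow : ∀ w ∈ Q, ∀ x ∉ P, ¬absv w ≤ absv a ⊔ absv x := fun w hw x hx hle =>
    Set.disjoint_left.1 hQ.1.2
      (hQc.convex (hQc.absv_mem hw) hQc.one_mem hle (hM1 _ ⟨x, hx, rfl⟩)) ⟨x, hx, rfl⟩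
  have hQP : Q ⊆ P := fun q hq => by_contra fun hqP => hlow q hq q hqP le_sup_right
  obtain ⟨x, hx⟩ := (Set.ne_univ_iff_exists_notMem P).1 hPu
  have haQ : a ∉ Q := fun haQ => hlow a haQ x hx le_sup_left
  have hQeq := hPmin Q (isPrimeConvex_of_maximal_disjoint hec hM1 hMsup hQ)
    (fun h => haQ (h ▸ Set.mem_univ a)) hQP
  exact haQ (hQeq ▸ ha)

theorem stmt14_general {α : Type u} [ResiduatedLattice α] (hec : ECyclic α)
    (hpolar : ∀ x : α, IsConvexSubalgebra (polar {x}) ∧ IsNormal (polar {x})) :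
    ∀ P : Set α, IsMinimalPrimeConvex P → IsNormal P := by
  intro P hP x hx y
  obtain ⟨z, hzP, hxz⟩ := hP.exists_notMem_absv_sup_eq_one hec hx
  have hsub : polar {z} ⊆ P := hP.1.polar_subset_of_notMem hec (hpolar z).1 hzP
  obtain ⟨h₁, h₂⟩ := (hpolar z).2 x (by rintro s rfl; exact hxz) y
  exact ⟨hsub h₁, hsub h₂⟩

/-- under left prelinearity, if all principal polars are normal convex
subalgebras, then all minimal prime convex subalgebras are normal. -/
theorem stmt14 {α : Type u} [ResiduatedLattice α] (hec : ECyclic α)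
    (hpre : ∀ x y : α, (ldiv x y ⊓ 1) ⊔ (ldiv y x ⊓ 1) = 1)
    (hpolar : ∀ x : α, IsConvexSubalgebra (polar {x}) ∧ IsNormal (polar {x})) :
    ∀ P : Set α, IsMinimalPrimeConvex P → IsNormal P :=
  stmt14_general hec hpolar
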